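/- Let v be a PMF on γ and let κ₁, λ₁ : γ → PMF α and κ₂, λ₂ : γ → PMF β be kernels. For a kernel κ : γ → PMF α, let τ_κ(v) denote the PMF on α × γ obtained by sampling c ~ v, a ~ κ(c), and outputting (a, c); and let J(κ, μ) denote the PMF on α × β × γ obtained by sampling c ~ v, then independently a ~ κ(c) and b ~ μ(c), and outputting (a, b, c). If Δ(τ_{κ₁}(v), τ_{λ₁}(v)) ≤ ε₁ and Δ(τ_{κ₂}(v), τ_{λ₂}(v)) ≤ ε₂, then Δ(J(κ₁, κ₂), J(λ₁, λ₂)) ≤ ε₁ + ε₂. (This hybrid lemma is the distributional core of Theorem 6: the parallel composition of an ε₁-weakly deletion-compliant data collector and an ε₂-weakly deletion-compliant data collector, which run independently given the environment's view, is (ε₁ + ε₂)-weakly deletion-compliant.) -/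
import Mathlib

open ENNReal

/-- Statistical distance between two PMFs: half the ℓ¹ distance. -/
noncomputable def SD {α : Type*} (p q : PMF α) : ℝ :=
  (1 / 2) * ∑' x, |(p x).toReal - (q x).toReal|

/-- `tauJoint v κ` samples `c ~ v`, `a ~ κ c`, and outputs `(a, c)`. -/
noncomputable def tauJoint {γ α : Type*} (v : PMF γ) (κ : γ → PMF α) : PMF (α × γ) :=
  v.bind fun c => (κ c).map fun a => (a, c)

/-- `jointIndep v κ μ` samples `c ~ v`, then independently `a ~ κ c` and `b ~ μ c`,
and outputs `(a, b, c)`. -/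
noncomputable def jointIndep {γ α β : Type*} (v : PMF γ)
    (κ : γ → PMF α) (μ : γ → PMF β) : PMF (α × β × γ) :=
  v.bind fun c => (κ c).bind fun a => (μ c).map fun b => (a, b, c)

noncomputable def Dfun {α : Type*} (p q : PMF α) (x : α) : ℝ≥0∞ :=
  (p x - q x) + (q x - p x)

lemma Dfun_ne_top {α : Type*} (p q : PMF α) (x : α) : Dfun p q x ≠ ∞ := by
  have h1 : p x - q x ≠ ∞ := (tsub_le_self.trans_lt (p.apply_lt_top x)).ne
  have h2 : q x - p x ≠ ∞ := (tsub_le_self.trans_lt (q.apply_lt_top x)).ne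
  simp [Dfun, ENNReal.add_ne_top, h1, h2]

lemma Dfun_toReal {α : Type*} (p q : PMF α) (x : α) :
    (Dfun p q x).toReal = |(p x).toReal - (q x).toReal| := by
  rcases le_total (p x) (q x) with h | h
  · have h1 : p x - q x = 0 := tsub_eq_zero_of_le h
    have : (p x).toReal ≤ (q x).toReal :=
      ENNReal.toReal_mono (q.apply_ne_top x) h
    rw [Dfun, h1, zero_add, ENNReal.toReal_sub_of_le h (q.apply_ne_top x),
      abs_of_nonpos (by linarith)]
    ring
  · have h1 : q x - p x = 0 := tsub_eq_zero_of_le h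
    have : (q x).toReal ≤ (p x).toReal :=
      ENNReal.toReal_mono (p.apply_ne_top x) h
    rw [Dfun, h1, add_zero, ENNReal.toReal_sub_of_le h (p.apply_ne_top x),
      abs_of_nonneg (by linarith)]

lemma tsum_Dfun_ne_top {α : Type*} (p q : PMF α) : ∑' x, Dfun p q x ≠ ∞ := by
  have hle : ∀ x, Dfun p q x ≤ p x + q x := fun x =>
    add_le_add tsub_le_self tsub_le_self
  have : ∑' x, Dfun p q x ≤ ∑' x, (p x + q x) := ENNReal.tsum_le_tsum hle
  rw [ENNReal.tsum_add, p.tsum_coe, q.tsum_coe] at this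
  exact (this.trans_lt (by norm_num)).ne

lemma SD_eq {α : Type*} (p q : PMF α) :
    SD p q = (1 / 2) * (∑' x, Dfun p q x).toReal := by
  rw [SD, ENNReal.tsum_toReal_eq (fun x => Dfun_ne_top p q x)]
  exact congrArg _ (tsum_congr fun x => (Dfun_toReal p q x).symm)

lemma SD_nonneg {α : Type*} (p q : PMF α) : 0 ≤ SD p q := by
  rw [SD_eq]; positivity

/-- Data-processing inequality for SD under a common kernel. -/
lemma SD_bind_le {α β : Type*} (p q : PMF α) (F : α → PMF β) :
    SD (p.bind F) (q.bind F) ≤ SD p q := by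
  rw [SD_eq, SD_eq]
  apply mul_le_mul_of_nonneg_left _ (by norm_num)
  apply ENNReal.toReal_mono (tsum_Dfun_ne_top p q)
  have key : ∀ y, Dfun (p.bind F) (q.bind F) y ≤ ∑' x, Dfun p q x * F x y := by
    intro y
    have haux : ∀ (r s : PMF α), r.bind F y - s.bind F y ≤ ∑' x, (r x - s x) * F x y := by
      intro r s
      rw [tsub_le_iff_right, PMF.bind_apply, PMF.bind_apply, ← ENNReal.tsum_add]
      refine ENNReal.tsum_le_tsum fun x => ?_
      rw [← add_mul]
      exact mul_le_mul_left le_tsub_add _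
    calc Dfun (p.bind F) (q.bind F) y
        ≤ (∑' x, (p x - q x) * F x y) + ∑' x, (q x - p x) * F x y :=
          add_le_add (haux p q) (haux q p)
      _ = ∑' x, Dfun p q x * F x y := by
          rw [← ENNReal.tsum_add]
          exact tsum_congr fun x => by rw [Dfun, add_mul]
  calc ∑' y, Dfun (p.bind F) (q.bind F) y
      ≤ ∑' y, ∑' x, Dfun p q x * F x y := ENNReal.tsum_le_tsum key
    _ = ∑' x, ∑' y, Dfun p q x * F x y := ENNReal.tsum_comm
    _ = ∑' x, Dfun p q x := by
        refine tsum_congr fun x => ?_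
        rw [ENNReal.tsum_mul_left, (F x).tsum_coe, mul_one]

lemma summable_abs_sub {α : Type*} (p q : PMF α) :
    Summable fun x => |(p x).toReal - (q x).toReal| := by
  have : Summable fun x => (Dfun p q x).toReal :=
    ENNReal.summable_toReal (tsum_Dfun_ne_top p q)
  exact this.congr fun x => Dfun_toReal p q x

lemma SD_triangle {α : Type*} (p q r : PMF α) : SD p r ≤ SD p q + SD q r := by
  rw [SD, SD, SD, ← mul_add, ← Summable.tsum_add (summable_abs_sub p q) (summable_abs_sub q r)]
  refine mul_le_mul_of_nonneg_left ?_ (by norm_num)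
  exact Summable.tsum_le_tsum (fun x => abs_sub_le _ _ _) (summable_abs_sub p r)
    ((summable_abs_sub p q).add (summable_abs_sub q r))

lemma jointIndep_eq_fst {γ α β : Type*} (v : PMF γ) (κ : γ → PMF α) (μ : γ → PMF β) :
    jointIndep v κ μ
      = (tauJoint v κ).bind fun ac => (μ ac.2).map fun b => (ac.1, b, ac.2) := by
  rw [jointIndep, tauJoint, PMF.bind_bind]
  refine congrArg _ (funext fun c => ?_)
  rw [PMF.bind_map]
  rfl

lemma jointIndep_eq_snd {γ α β : Type*} (v : PMF γ) (κ : γ → PMF α) (μ : γ → PMF β) :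
    jointIndep v κ μ
      = (tauJoint v μ).bind fun bc => (κ bc.2).map fun a => (a, bc.1, bc.2) := by
  rw [jointIndep, tauJoint, PMF.bind_bind]
  refine congrArg _ (funext fun c => ?_)
  rw [PMF.bind_map]
  simp only [Function.comp, PMF.map]
  exact PMF.bind_comm _ _ _

/-- Hybrid lemma for parallel composition: if each component's simulator is close to the
true conditional state given the view, then the joint independent composition is
`ε₁ + ε₂`-close. -/
theorem parallel_composition_hybrid {γ α β : Type*} [Countable γ] [Countable α] [Countable β]
    (v : PMF γ) (κ₁ lam₁ : γ → PMF α) (κ₂ lam₂ : γ → PMF β) (ε₁ ε₂ : ℝ)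
    (h₁ : SD (tauJoint v κ₁) (tauJoint v lam₁) ≤ ε₁)
    (h₂ : SD (tauJoint v κ₂) (tauJoint v lam₂) ≤ ε₂) :
    SD (jointIndep v κ₁ κ₂) (jointIndep v lam₁ lam₂) ≤ ε₁ + ε₂ := by
  have e1 : SD (jointIndep v κ₁ κ₂) (jointIndep v lam₁ κ₂) ≤ ε₁ := by
    rw [jointIndep_eq_fst, jointIndep_eq_fst]
    exact (SD_bind_le _ _ _).trans h₁
  have e2 : SD (jointIndep v lam₁ κ₂) (jointIndep v lam₁ lam₂) ≤ ε₂ := by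
    rw [jointIndep_eq_snd v lam₁ κ₂, jointIndep_eq_snd v lam₁ lam₂]
    exact (SD_bind_le _ _ _).trans h₂
  exact (SD_triangle _ _ _).trans (add_le_add e1 e2)
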